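/- arXiv:2105.00980 — 2 statements merged into one kernel-verified Lean document; each statement's English description precedes it below -/
import Mathlib

section
/- For each even integer x ≥ 4, the sequence [x, 2x, 0, x+1, 1, x+2, 2, 3, x+3, x+4, 4, 5, x+5, ..., x-1, 2x-1] is a Hamiltonian path on {0,...,2x} in K_{2x+1} whose multiset of edge lengths is {1^{x-2}, x^{x+2}}. -/
/-- The cyclic edge length between vertices `a` and `b` in `K_v`. -/
def ell (v a b : ℕ) : ℕ := min (Nat.dist a b) (v - Nat.dist a b)

/-- The multiset of edge lengths of a path `h` in `K_v`. -/
def edgeLengths (v : ℕ) (h : List ℕ) : Multiset ℕ :=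
  ↑(List.zipWith (ell v) h h.tail)

/-- `h` is a Hamiltonian path on the vertex set `{0, ..., v-1}` of `K_v`:
it is a list using each of `0, ..., v-1` exactly once. -/
def IsHamPath (v : ℕ) (h : List ℕ) : Prop := h.Perm (List.range v)

/-!
After the opening segment `x, 2x, 0, x+1, 1, x+2, 2` (lengths `x, 1, x, x, x, x`) the path runs
through the rungs `{3 + j, x + 3 + j}`, each of length `x`; the order inside a rung alternates
with the parity of `j`, so consecutive rungs are joined by an edge of length `1`. The path is
Hamiltonian because it visits every vertex of `{0, ..., 2x}` and has only `2x + 1` entries.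
-/

lemma edgeLengths_cons_cons (v a b : ℕ) (l : List ℕ) :
    edgeLengths v (a :: b :: l) = ell v a b ::ₘ edgeLengths v (b :: l) := rfl

lemma edgeLengths_append_cons (v c a : ℕ) (t : List ℕ) :
    ∀ {l : List ℕ}, l.getLast? = some c →
      edgeLengths v (l ++ a :: t) = edgeLengths v l + ell v c a ::ₘ edgeLengths v (a :: t)
  | [], h => by simp at h
  | [b], h => by
    obtain rfl : b = c := by simpa using h
    exact (zero_add _).symm
  | b :: d :: l, h => by
    rw [List.cons_append, List.cons_append, edgeLengths_cons_cons, ← List.cons_append,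
      edgeLengths_append_cons v c a t (by simpa using h), edgeLengths_cons_cons, Multiset.cons_add]

lemma edgeLengths_pair (v a b : ℕ) : edgeLengths v [a, b] = {ell v a b} := rfl

def rung (x j : ℕ) : List ℕ := if j % 2 = 0 then [3 + j, x + 3 + j] else [x + 3 + j, 3 + j]

def ladder (x n : ℕ) : List ℕ := (List.range n).flatMap (rung x)

lemma ladder_succ (x n : ℕ) : ladder x (n + 1) = ladder x n ++ rung x n := by
  simp [ladder, List.range_succ]

lemma length_ladder (x n : ℕ) : (ladder x n).length = 2 * n := by
  induction n with
  | zero => rfl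
  | succ n ih => rw [ladder_succ, List.length_append, ih, rung]; split_ifs <;> simp <;> ring

lemma mem_ladder {x n j : ℕ} (hj : j < n) : 3 + j ∈ ladder x n ∧ x + 3 + j ∈ ladder x n := by
  simp only [ladder, List.mem_flatMap, List.mem_range]
  exact ⟨⟨j, hj, by unfold rung; split_ifs <;> simp⟩, ⟨j, hj, by unfold rung; split_ifs <;> simp⟩⟩

lemma getLast?_two_cons_ladder (x n : ℕ) :
    (2 :: ladder x n).getLast? = some (if n % 2 = 0 then 2 + n else x + 2 + n) := by
  induction n with
  | zero => rfl
  | succ n ih =>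
    rw [ladder_succ, ← List.cons_append, List.getLast?_append, rung]
    split_ifs <;> simp <;> omega

lemma edgeLengths_two_cons_ladder {x : ℕ} (hx : 1 ≤ x) (n : ℕ) :
    edgeLengths (2 * x + 1) (2 :: ladder x n) =
      Multiset.replicate n 1 + Multiset.replicate n x := by
  induction n with
  | zero => rfl
  | succ n ih =>
    have hlast := getLast?_two_cons_ladder x n
    rw [ladder_succ, ← List.cons_append, rung]
    split_ifs at hlast ⊢
    · rw [edgeLengths_append_cons _ _ _ _ hlast, ih, edgeLengths_pair,
        show ell (2 * x + 1) (2 + n) (3 + n) = 1 by unfold ell Nat.dist; omega,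
        show ell (2 * x + 1) (3 + n) (x + 3 + n) = x by unfold ell Nat.dist; omega]
      simp only [Multiset.replicate_succ, ← Multiset.singleton_add]
      abel
    · rw [edgeLengths_append_cons _ _ _ _ hlast, ih, edgeLengths_pair,
        show ell (2 * x + 1) (x + 2 + n) (x + 3 + n) = 1 by unfold ell Nat.dist; omega,
        show ell (2 * x + 1) (x + 3 + n) (3 + n) = x by unfold ell Nat.dist; omega]
      simp only [Multiset.replicate_succ, ← Multiset.singleton_add]
      abel

def ladderPath (x : ℕ) : List ℕ := [x, 2 * x, 0, x + 1, 1, x + 2, 2] ++ ladder x (x - 3)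

lemma isHamPath_ladderPath {x : ℕ} (hx : 3 ≤ x) : IsHamPath (2 * x + 1) (ladderPath x) := by
  have hcover : List.range (2 * x + 1) ⊆ ladderPath x := by
    intro a ha
    rw [List.mem_range] at ha
    rcases (show (a < 3 ∨ x ≤ a ∧ a < x + 3 ∨ a = 2 * x) ∨ 3 ≤ a ∧ a < x ∨ x + 3 ≤ a ∧ a < 2 * x
      by omega) with h | h | h
    · exact List.mem_append_left _ (by simp; omega)
    · obtain ⟨j, rfl⟩ : ∃ j, a = 3 + j := ⟨a - 3, by omega⟩
      exact List.mem_append_right _ (mem_ladder (by omega)).1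
    · obtain ⟨j, rfl⟩ : ∃ j, a = x + 3 + j := ⟨a - (x + 3), by omega⟩
      exact List.mem_append_right _ (mem_ladder (by omega)).2
  have hlen : (ladderPath x).length ≤ (List.range (2 * x + 1)).length := by
    simp only [ladderPath, List.length_append, length_ladder, List.length_cons, List.length_nil,
      List.length_range]
    omega
  exact ((List.nodup_range.subperm hcover).perm_of_length_le hlen).symm

lemma edgeLengths_ladderPath {x : ℕ} (hx : 3 ≤ x) :
    edgeLengths (2 * x + 1) (ladderPath x) =
      Multiset.replicate (x - 2) 1 + Multiset.replicate (x + 2) x := by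
  have hrhs : Multiset.replicate (x - 2) 1 + Multiset.replicate (x + 2) x =
      x ::ₘ 1 ::ₘ x ::ₘ x ::ₘ x ::ₘ x ::ₘ
        (Multiset.replicate (x - 3) 1 + Multiset.replicate (x - 3) x) := by
    obtain ⟨n, rfl⟩ : ∃ n, x = n + 3 := ⟨x - 3, by omega⟩
    simp only [show n + 3 - 2 = n + 1 by omega, show n + 3 + 2 = n + 5 by omega,
      Nat.add_sub_cancel, Multiset.replicate_succ, ← Multiset.singleton_add]
    abel
  show edgeLengths _ (_ :: _ :: _ :: _ :: _ :: _ :: 2 :: ladder _ _) = _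
  rw [hrhs]
  simp only [edgeLengths_cons_cons, edgeLengths_two_cons_ladder (by omega : 1 ≤ x)]
  iterate 6 refine congrArg₂ _ (by unfold ell Nat.dist; omega) ?_
  rfl

theorem stmt_5_general (x : ℕ) (hx : 4 ≤ x) :
    List.Perm ([x, 2*x, 0, x+1, 1, x+2, 2] ++
      (List.range (x-3)).flatMap (fun j =>
        if j % 2 = 0 then [3+j, x+3+j] else [x+3+j, 3+j]))
      (List.range (2*x+1)) ∧
    edgeLengths (2*x+1)
      ([x, 2*x, 0, x+1, 1, x+2, 2] ++
        (List.range (x-3)).flatMap (fun j =>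
          if j % 2 = 0 then [3+j, x+3+j] else [x+3+j, 3+j])) =
      Multiset.replicate (x-2) 1 + Multiset.replicate (x+2) x :=
  ⟨isHamPath_ladderPath (by omega), edgeLengths_ladderPath (by omega)⟩

theorem stmt_5 (x : ℕ) (hx : 4 ≤ x) (hev : Even x) :
    List.Perm ([x, 2*x, 0, x+1, 1, x+2, 2] ++
      (List.range (x-3)).flatMap (fun j =>
        if j % 2 = 0 then [3+j, x+3+j] else [x+3+j, 3+j]))
      (List.range (2*x+1)) ∧
    edgeLengths (2*x+1)
      ([x, 2*x, 0, x+1, 1, x+2, 2] ++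
        (List.range (x-3)).flatMap (fun j =>
          if j % 2 = 0 then [3+j, x+3+j] else [x+3+j, 3+j])) =
      Multiset.replicate (x-2) 1 + Multiset.replicate (x+2) x :=
  stmt_5_general x hx
end

section
/- For each even integer x ≥ 4, the sequence [0, x, 2x, 2x+1, x+1, 1, 2, x+2, 2x+2, ..., x-4, 2x-4, 3x-4, x-3, 2x-3, 2x-2, x-2, 3x-3, 3x-2, x-1, 2x-1] is a Hamiltonian path on {0,...,3x-2} in K_{3x-1} whose multiset of edge lengths is {1^{x-2}, x^{2x}}, where the length of an edge between u and w is min(|u-w|, (3x-1)-|u-w|). -/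
lemma edgeLengths_append {v a b : ℕ} {l₁ l₂ : List ℕ} (h₁ : l₁.getLast? = some a)
    (h₂ : l₂.head? = some b) :
    edgeLengths v (l₁ ++ l₂) = edgeLengths v l₁ + ell v a b ::ₘ edgeLengths v l₂ := by
  obtain ⟨l₂, rfl⟩ : ∃ l, l₂ = b :: l := by
    cases l₂ with
    | nil => simp at h₂
    | cons c l => exact ⟨l, by simpa using h₂⟩
  induction l₁ with
  | nil => simp at h₁
  | cons c l ih =>
    cases l with
    | nil => simp_all [edgeLengths]
    | cons d l =>
      rw [List.getLast?_cons_cons] at h₁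
      simp_all [edgeLengths]

def column (x t : ℕ) : List ℕ :=
  if t % 2 = 0 then [t, x + t, 2 * x + t] else [2 * x + t, x + t, t]

def zigzag (x n : ℕ) : List ℕ := (List.range n).flatMap (column x)

lemma zigzag_succ (x n : ℕ) : zigzag x (n + 1) = zigzag x n ++ column x n := by
  simp [zigzag, List.range_succ]

lemma column_perm (x t : ℕ) : (column x t).Perm [t, x + t, 2 * x + t] := by
  unfold column
  split_ifs
  · rfl
  · exact (List.reverse_perm _).symm

lemma column_head? (x t : ℕ) :
    (column x t).head? = some (if t % 2 = 0 then t else 2 * x + t) := by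
  unfold column; split_ifs <;> rfl

lemma column_getLast? (x t : ℕ) :
    (column x t).getLast? = some (if t % 2 = 0 then 2 * x + t else t) := by
  unfold column; split_ifs <;> rfl

lemma edgeLengths_column {v x : ℕ} (t : ℕ) (hx : x ≤ v - x) :
    edgeLengths v (column x t) = {x, x} := by
  rw [show ({x, x} : Multiset ℕ) = ([x, x] : List ℕ) from rfl, edgeLengths]
  congr 1
  unfold column
  split_ifs <;>
    simp only [List.tail_cons, List.zipWith_cons_cons, List.zipWith_nil_right, List.cons.injEq,
      ell, Nat.dist, and_true] <;> omega

lemma ell_consecutive_columns {v x : ℕ} (t : ℕ) (hv : 2 ≤ v) :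
    ell v (if t % 2 = 0 then 2 * x + t else t)
      (if (t + 1) % 2 = 0 then t + 1 else 2 * x + (t + 1)) = 1 := by
  simp only [ell, Nat.dist]
  split_ifs <;> omega

lemma coe_zigzag (x n : ℕ) : (zigzag x n : Multiset ℕ) =
    Multiset.range n + (Multiset.range n).map (x + ·) + (Multiset.range n).map (2 * x + ·) := by
  have hbind : (zigzag x n : Multiset ℕ) =
      (Multiset.range n).bind fun t => {t} + {x + t} + {2 * x + t} := by
    rw [zigzag, ← Multiset.coe_bind, Multiset.coe_range]
    congr 1
    funext t
    exact Multiset.coe_eq_coe.2 (column_perm x t)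
  rw [hbind, Multiset.bind_add, Multiset.bind_add, Multiset.bind_singleton,
    Multiset.bind_singleton, Multiset.bind_singleton, Multiset.map_id']

lemma zigzag_getLast? (x n : ℕ) :
    (zigzag x (n + 1)).getLast? = some (if n % 2 = 0 then 2 * x + n else n) := by
  rw [zigzag_succ, List.getLast?_append_of_ne_nil _ (by unfold column; split_ifs <;> simp),
    column_getLast?]

lemma edgeLengths_zigzag {v x : ℕ} (hx : x ≤ v - x) (hv : 2 ≤ v) (n : ℕ) :
    edgeLengths v (zigzag x (n + 1)) =
      Multiset.replicate n 1 + Multiset.replicate (2 * n + 2) x := by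
  induction n with
  | zero => simpa [zigzag] using edgeLengths_column 0 hx
  | succ n ih =>
    rw [zigzag_succ, edgeLengths_append (zigzag_getLast? x n) (column_head? x (n + 1)), ih,
      ell_consecutive_columns n hv, edgeLengths_column _ hx,
      show 2 * (n + 1) + 2 = 2 * n + 2 + 2 by ring]
    simp only [Multiset.replicate_succ, Multiset.insert_eq_cons, ← Multiset.singleton_add]
    abel

def finale (x : ℕ) : List ℕ :=
  [x - 3, 2 * x - 3, 2 * x - 2, x - 2, 3 * x - 3, 3 * x - 2, x - 1, 2 * x - 1]

lemma finale_eq {x n : ℕ} (hx : x = n + 3) :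
    finale x = [n, x + n, x + (n + 1), n + 1, 2 * x + n, 2 * x + (n + 1), n + 2, x + (n + 2)] := by
  simp only [finale, List.cons.injEq, and_true]
  omega

lemma range_two_mul_add (x k : ℕ) : Multiset.range (2 * x + k) =
    Multiset.range x + (Multiset.range x).map (x + ·) + (Multiset.range k).map (2 * x + ·) := by
  rw [Multiset.range_add, two_mul, Multiset.range_add]

lemma zigzag_append_finale_perm {x : ℕ} (hx : 3 ≤ x) :
    (zigzag x (x - 3) ++ finale x).Perm (List.range (3 * x - 1)) := by
  obtain ⟨n, hn⟩ : ∃ n, x = n + 3 := ⟨x - 3, by omega⟩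
  have hrange : Multiset.range x = (n + 2) ::ₘ (n + 1) ::ₘ n ::ₘ Multiset.range n := by
    simp only [hn, Multiset.range_succ]
  rw [← Multiset.coe_eq_coe, ← Multiset.coe_add, coe_zigzag, finale_eq hn, Multiset.coe_range,
    show 3 * x - 1 = 2 * x + (n + 2) by omega, range_two_mul_add, show x - 3 = n by omega]
  simp only [hrange, Multiset.range_succ, Multiset.map_cons]
  simp only [← Multiset.cons_coe, Multiset.coe_nil, ← Multiset.singleton_add, add_zero]
  abel

lemma edgeLengths_finale {x : ℕ} (hx : 3 ≤ x) :
    edgeLengths (3 * x - 1) (finale x) = Multiset.replicate 2 1 + Multiset.replicate 5 x := by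
  have hlist : List.zipWith (ell (3 * x - 1)) (finale x) (finale x).tail =
      [x, 1, x, x, 1, x, x] := by
    rw [finale_eq (n := x - 3) (by omega)]
    simp only [List.tail_cons, List.zipWith_cons_cons, List.zipWith_nil_right, List.cons.injEq,
      ell, Nat.dist, and_true]
    omega
  rw [edgeLengths, hlist]
  simp only [Multiset.replicate_succ, Multiset.replicate_zero, ← Multiset.cons_coe,
    Multiset.coe_nil, ← Multiset.singleton_add, add_zero]
  abel

lemma edgeLengths_zigzag_append_finale {x : ℕ} (hx : 4 ≤ x) (hev : Even x) :
    edgeLengths (3 * x - 1) (zigzag x (x - 3) ++ finale x) =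
      Multiset.replicate (x - 2) 1 + Multiset.replicate (2 * x) x := by
  obtain ⟨m, hm, hm_even⟩ : ∃ m, x - 3 = m + 1 ∧ m % 2 = 0 :=
    ⟨x - 4, by omega, by obtain ⟨k, rfl⟩ := hev; omega⟩
  have hhead : (finale x).head? = some (m + 1) := by
    simp only [finale, List.head?_cons, Option.some.injEq]
    omega
  have hjump : ell (3 * x - 1) (2 * x + m) (m + 1) = x := by
    simp only [ell, Nat.dist]
    omega
  rw [hm, edgeLengths_append (zigzag_getLast? x m) hhead,
    edgeLengths_zigzag (by omega) (by omega), edgeLengths_finale (by omega), if_pos hm_even, hjump,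
    show x - 2 = m + 2 by omega, show 2 * x = 2 * m + 2 + 1 + 5 by omega,
    Multiset.replicate_add m, Multiset.replicate_add (2 * m + 2 + 1),
    Multiset.replicate_add (2 * m + 2) 1, Multiset.replicate_one, ← Multiset.singleton_add]
  abel

theorem stmt_6 (x : ℕ) (hx : 4 ≤ x) (hev : Even x) :
    List.Perm ((List.range (x-3)).flatMap (fun t =>
        if t % 2 = 0 then [t, x+t, 2*x+t] else [2*x+t, x+t, t]) ++
      [x-3, 2*x-3, 2*x-2, x-2, 3*x-3, 3*x-2, x-1, 2*x-1])
      (List.range (3*x-1)) ∧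
    edgeLengths (3*x-1)
      ((List.range (x-3)).flatMap (fun t =>
          if t % 2 = 0 then [t, x+t, 2*x+t] else [2*x+t, x+t, t]) ++
        [x-3, 2*x-3, 2*x-2, x-2, 3*x-3, 3*x-2, x-1, 2*x-1]) =
      Multiset.replicate (x-2) 1 + Multiset.replicate (2*x) x :=
  ⟨zigzag_append_finale_perm (by omega), edgeLengths_zigzag_append_finale hx hev⟩
end
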